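/- arXiv:1705.08772 — 4 statements merged into one kernel-verified Lean document; each statement's English description precedes it below -/
import Mathlib

section
/- Let 0 < k₁ < 1, 0 < k₂ < 1, r > 0, d > 0, and c ≥ 2·max{1, √(rd)}. Then the quartic polynomial F₁(λ) = λ⁴ − (c + c/d)λ³ + (c²/d − u* − (r/d)v*)λ² + ((rc/d)v* + (c/d)u*)λ + (r/d)(1 − k₁k₂)u*v* has four distinct real roots, of which exactly two are negative and exactly two are positive. (Equivalently, the equilibrium (u*, 0, v*, 0) of the traveling-wave ODE system is hyperbolic with two-dimensional stable and unstable subspaces.) -/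
private lemma cubic_vanish (A B C D x y z w : ℝ)
    (hxy : x ≠ y) (hxz : x ≠ z) (hxw : x ≠ w) (hyz : y ≠ z) (hyw : y ≠ w) (hzw : z ≠ w)
    (hx : A*x^3 + B*x^2 + C*x + D = 0)
    (hy : A*y^3 + B*y^2 + C*y + D = 0)
    (hz : A*z^3 + B*z^2 + C*z + D = 0)
    (hw : A*w^3 + B*w^2 + C*w + D = 0) :
    A = 0 ∧ B = 0 ∧ C = 0 ∧ D = 0 := by
  have e1 : A*(x^2+x*y+y^2) + B*(x+y) + C = 0 := by
    have h : (x - y) * (A*(x^2+x*y+y^2) + B*(x+y) + C) = 0 := by linear_combination hx - hy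
    exact (mul_eq_zero.mp h).resolve_left (sub_ne_zero.mpr hxy)
  have e2 : A*(y^2+y*z+z^2) + B*(y+z) + C = 0 := by
    have h : (y - z) * (A*(y^2+y*z+z^2) + B*(y+z) + C) = 0 := by linear_combination hy - hz
    exact (mul_eq_zero.mp h).resolve_left (sub_ne_zero.mpr hyz)
  have e3 : A*(z^2+z*w+w^2) + B*(z+w) + C = 0 := by
    have h : (z - w) * (A*(z^2+z*w+w^2) + B*(z+w) + C) = 0 := by linear_combination hz - hw
    exact (mul_eq_zero.mp h).resolve_left (sub_ne_zero.mpr hzw)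
  have f1 : A*(x+y+z) + B = 0 := by
    have h : (x - z) * (A*(x+y+z) + B) = 0 := by linear_combination e1 - e2
    exact (mul_eq_zero.mp h).resolve_left (sub_ne_zero.mpr hxz)
  have f2 : A*(y+z+w) + B = 0 := by
    have h : (y - w) * (A*(y+z+w) + B) = 0 := by linear_combination e2 - e3
    exact (mul_eq_zero.mp h).resolve_left (sub_ne_zero.mpr hyw)
  have hA : A = 0 := by
    have h : (x - w) * A = 0 := by linear_combination f1 - f2
    exact (mul_eq_zero.mp h).resolve_left (sub_ne_zero.mpr hxw)
  have hB : B = 0 := by linear_combination f1 - (x+y+z)*hA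
  have hC : C = 0 := by linear_combination e1 - (x^2+x*y+y^2)*hA - (x+y)*hB
  have hD : D = 0 := by linear_combination hx - x^3*hA - x^2*hB - x*hC
  exact ⟨hA, hB, hC, hD⟩

private lemma quartic_pos (a3 a2 a1 a0 x : ℝ)
    (h : 1 + |a3| + |a2| + |a1| + |a0| ≤ |x|) :
    0 < x^4 - a3*x^3 + a2*x^2 + a1*x + a0 := by
  have h1 : (1:ℝ) ≤ |x| := by
    have : (0:ℝ) ≤ |a3| + |a2| + |a1| + |a0| := by positivity
    linarith
  have e3 : a3 * x^3 ≤ |a3| * |x|^3 := by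
    calc a3 * x^3 ≤ |a3 * x^3| := le_abs_self _
    _ = |a3| * |x|^3 := by rw [abs_mul, abs_pow]
  have e2 : -(|a2| * |x|^2) ≤ a2 * x^2 := by
    have : |a2 * x^2| = |a2| * |x|^2 := by rw [abs_mul, abs_pow]
    linarith [neg_abs_le (a2 * x^2), this.ge, this.le]
  have e1 : -(|a1| * |x|) ≤ a1 * x := by
    have : |a1 * x| = |a1| * |x| := abs_mul _ _
    linarith [neg_abs_le (a1 * x)]
  have e0 : -|a0| ≤ a0 := neg_abs_le a0
  have m2 : |a2| * |x|^2 ≤ |a2| * |x|^3 := by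
    have : |x|^2 ≤ |x|^3 := pow_le_pow_right₀ h1 (by norm_num)
    exact mul_le_mul_of_nonneg_left this (abs_nonneg _)
  have m1 : |a1| * |x| ≤ |a1| * |x|^3 := by
    have : |x| ≤ |x|^3 := by
      calc |x| = |x|^1 := (pow_one _).symm
      _ ≤ |x|^3 := pow_le_pow_right₀ h1 (by norm_num)
    exact mul_le_mul_of_nonneg_left this (abs_nonneg _)
  have m0 : |a0| ≤ |a0| * |x|^3 := by
    have h3 : (1:ℝ) ≤ |x|^3 := one_le_pow₀ h1
    nlinarith [abs_nonneg a0]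
  have hx4 : x^4 = |x| * |x|^3 := by
    rw [← pow_succ']
    rw [← abs_pow]
    exact (abs_of_nonneg (by positivity)).symm
  have hx2 : x^2 = |x|^2 := (sq_abs x).symm
  have key : (1 + |a3| + |a2| + |a1| + |a0|) * |x|^3 ≤ |x| * |x|^3 :=
    mul_le_mul_of_nonneg_right h (by positivity)
  have h3 : (1:ℝ) ≤ |x|^3 := one_le_pow₀ h1
  nlinarith [e3, e2, e1, e0, m2, m1, m0, key, h3]
/-- In the weak competition case, the characteristic quartic `F₁` of the
linearization of the traveling-wave ODE system at `(u*, 0, v*, 0)` has four distinct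
real roots, exactly two negative and two positive. -/
theorem quartic_F1_four_distinct_real_roots
    (k₁ k₂ r d c : ℝ)
    (hk₁ : 0 < k₁) (hk₁' : k₁ < 1) (hk₂ : 0 < k₂) (hk₂' : k₂ < 1)
    (hr : 0 < r) (hd : 0 < d)
    (hc : 2 * max 1 (Real.sqrt (r * d)) ≤ c)
    (ustar vstar : ℝ)
    (hust : ustar = (1 - k₁) / (1 - k₁ * k₂))
    (hvst : vstar = (1 - k₂) / (1 - k₁ * k₂)) :
    ∃ l₁ l₂ l₃ l₄ : ℝ, l₁ < l₂ ∧ l₂ < 0 ∧ 0 < l₃ ∧ l₃ < l₄ ∧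
      ∀ lam : ℝ,
        lam ^ 4 - (c + c / d) * lam ^ 3
          + (c ^ 2 / d - ustar - r / d * vstar) * lam ^ 2
          + (r * c / d * vstar + c / d * ustar) * lam
          + r / d * (1 - k₁ * k₂) * ustar * vstar
        = (lam - l₁) * (lam - l₂) * (lam - l₃) * (lam - l₄) := by
  have hkk : 0 < 1 - k₁ * k₂ := by nlinarith
  have hu : 0 < ustar := by rw [hust]; exact div_pos (by linarith) hkk
  have hv : 0 < vstar := by rw [hvst]; exact div_pos (by linarith) hkk
  set F : ℝ → ℝ := fun lam =>
    lam ^ 4 - (c + c / d) * lam ^ 3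
      + (c ^ 2 / d - ustar - r / d * vstar) * lam ^ 2
      + (r * c / d * vstar + c / d * ustar) * lam
      + r / d * (1 - k₁ * k₂) * ustar * vstar with hF
  have hcont : Continuous F := by
    rw [hF]; fun_prop
  have hfe : ∀ lam : ℝ, F lam =
      (lam^2 - c*lam - ustar) * (lam^2 - (c/d)*lam - (r/d)*vstar)
        - (r/d)*(k₁*k₂)*ustar*vstar := by
    intro lam; rw [hF]; ring
  have hε : 0 < (r/d)*(k₁*k₂)*ustar*vstar := by positivity
  -- roots of the first quadratic
  set s : ℝ := Real.sqrt (c^2 + 4*ustar) with hsdef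
  have hs0 : 0 ≤ s := Real.sqrt_nonneg _
  have hs2 : s^2 = c^2 + 4*ustar := Real.sq_sqrt (by positivity)
  have hsc : c < s := by nlinarith
  have hsc' : -c < s := by nlinarith
  set μ₁ : ℝ := (c - s)/2 with hμ₁def
  set μ₂ : ℝ := (c + s)/2 with hμ₂def
  have hμ₁ : μ₁ < 0 := by rw [hμ₁def]; linarith
  have hμ₂ : 0 < μ₂ := by rw [hμ₂def]; linarith
  have hP₁ : μ₁^2 - c*μ₁ - ustar = 0 := by rw [hμ₁def]; linear_combination hs2 / 4
  have hP₂ : μ₂^2 - c*μ₂ - ustar = 0 := by rw [hμ₂def]; linear_combination hs2 / 4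
  have hFμ₁ : F μ₁ < 0 := by
    have : F μ₁ = -((r/d)*(k₁*k₂)*ustar*vstar) := by
      rw [hfe μ₁]; linear_combination (μ₁^2 - (c/d)*μ₁ - (r/d)*vstar) * hP₁
    rw [this]; linarith
  have hFμ₂ : F μ₂ < 0 := by
    have : F μ₂ = -((r/d)*(k₁*k₂)*ustar*vstar) := by
      rw [hfe μ₂]; linear_combination (μ₂^2 - (c/d)*μ₂ - (r/d)*vstar) * hP₂
    rw [this]; linarith
  have hF0 : 0 < F 0 := by
    have h0 : F 0 = r/d*(1-k₁*k₂)*ustar*vstar := by rw [hF]; ring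
    rw [h0]; positivity
  -- the large bound M
  set a3 : ℝ := c + c / d with ha3
  set a2 : ℝ := c ^ 2 / d - ustar - r / d * vstar with ha2
  set a1 : ℝ := r * c / d * vstar + c / d * ustar with ha1
  set a0 : ℝ := r / d * (1 - k₁ * k₂) * ustar * vstar with ha0
  set M : ℝ := (1 + |a3| + |a2| + |a1| + |a0|) + (|μ₁| + μ₂) with hM
  have hMbig : 1 + |a3| + |a2| + |a1| + |a0| ≤ M := by
    rw [hM]; have := abs_nonneg μ₁; linarith
  have hM0 : 0 < M := by
    have : (0:ℝ) ≤ |a3| + |a2| + |a1| + |a0| := by positivity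
    linarith
  have hMμ₂ : μ₂ < M := by
    have h1 : (0:ℝ) ≤ |a3| + |a2| + |a1| + |a0| := by positivity
    have := abs_nonneg μ₁
    rw [hM]; linarith
  have hMμ₁ : -M < μ₁ := by
    have h1 : (0:ℝ) ≤ |a3| + |a2| + |a1| + |a0| := by positivity
    have := le_abs_self (-μ₁)
    rw [abs_neg] at this
    rw [hM]; linarith
  have hFM : 0 < F M := by
    have := quartic_pos a3 a2 a1 a0 M (by rw [abs_of_pos hM0]; exact hMbig)
    rw [hF]; exact this
  have hFM' : 0 < F (-M) := by
    have habs : 1 + |a3| + |a2| + |a1| + |a0| ≤ |(-M)| := by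
      rw [abs_neg, abs_of_pos hM0]; exact hMbig
    have := quartic_pos a3 a2 a1 a0 (-M) habs
    rw [hF]; exact this
  -- IVT: four roots
  obtain ⟨l₁, hl₁mem, hl₁⟩ := intermediate_value_Ioo' hMμ₁.le
    hcont.continuousOn (Set.mem_Ioo.mpr ⟨hFμ₁, hFM'⟩)
  obtain ⟨l₂, hl₂mem, hl₂⟩ := intermediate_value_Ioo (le_of_lt hμ₁)
    hcont.continuousOn (Set.mem_Ioo.mpr ⟨hFμ₁, hF0⟩)
  obtain ⟨l₃, hl₃mem, hl₃⟩ := intermediate_value_Ioo' (le_of_lt hμ₂)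
    hcont.continuousOn (Set.mem_Ioo.mpr ⟨hFμ₂, hF0⟩)
  obtain ⟨l₄, hl₄mem, hl₄⟩ := intermediate_value_Ioo (le_of_lt hMμ₂)
    hcont.continuousOn (Set.mem_Ioo.mpr ⟨hFμ₂, hFM⟩)
  obtain ⟨hl₁a, hl₁b⟩ := hl₁mem
  obtain ⟨hl₂a, hl₂b⟩ := hl₂mem
  obtain ⟨hl₃a, hl₃b⟩ := hl₃mem
  obtain ⟨hl₄a, hl₄b⟩ := hl₄mem
  -- order: l₁ < μ₁ < l₂ < 0 < l₃ < μ₂ < l₄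
  have h12 : l₁ < l₂ := lt_trans hl₁b hl₂a
  have h23 : l₂ < l₃ := lt_trans hl₂b hl₃a
  have h34 : l₃ < l₄ := lt_trans hl₃b hl₄a
  refine ⟨l₁, l₂, l₃, l₄, h12, hl₂b, hl₃a, h34, ?_⟩
  -- factorization: the difference is a cubic vanishing at 4 distinct points
  set A : ℝ := (l₁ + l₂ + l₃ + l₄) - a3 with hA
  set B : ℝ := a2 - (l₁*l₂ + l₁*l₃ + l₁*l₄ + l₂*l₃ + l₂*l₄ + l₃*l₄) with hB
  set Cc : ℝ := a1 + (l₁*l₂*l₃ + l₁*l₂*l₄ + l₁*l₃*l₄ + l₂*l₃*l₄) with hCc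
  set Dd : ℝ := a0 - l₁*l₂*l₃*l₄ with hDd
  have hdiff : ∀ lam : ℝ, F lam - (lam - l₁) * (lam - l₂) * (lam - l₃) * (lam - l₄)
      = A*lam^3 + B*lam^2 + Cc*lam + Dd := by
    intro lam; rw [hF, hA, hB, hCc, hDd, ha3, ha2, ha1, ha0]; ring
  have hvan := cubic_vanish A B Cc Dd l₁ l₂ l₃ l₄
    (ne_of_lt h12) (ne_of_lt (lt_trans h12 h23)) (ne_of_lt (lt_trans (lt_trans h12 h23) h34))
    (ne_of_lt h23) (ne_of_lt (lt_trans h23 h34)) (ne_of_lt h34)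
    (by have h := hdiff l₁
        rw [hl₁, show (l₁ - l₁) * (l₁ - l₂) * (l₁ - l₃) * (l₁ - l₄) = 0 from by ring] at h
        linarith [h])
    (by have h := hdiff l₂
        rw [hl₂, show (l₂ - l₁) * (l₂ - l₂) * (l₂ - l₃) * (l₂ - l₄) = 0 from by ring] at h
        linarith [h])
    (by have h := hdiff l₃
        rw [hl₃, show (l₃ - l₁) * (l₃ - l₂) * (l₃ - l₃) * (l₃ - l₄) = 0 from by ring] at h
        linarith [h])
    (by have h := hdiff l₄
        rw [hl₄, show (l₄ - l₁) * (l₄ - l₂) * (l₄ - l₃) * (l₄ - l₄) = 0 from by ring] at h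
        linarith [h])
  obtain ⟨hA0, hB0, hC0, hD0⟩ := hvan
  intro lam
  have h1 := hdiff lam
  rw [hA0, hB0, hC0, hD0] at h1
  have h2 : F lam = (lam - l₁) * (lam - l₂) * (lam - l₃) * (lam - l₄) := by linarith [h1]
  rw [hF] at h2
  exact h2
end

section
/- Let 0 < k₁ < 1, 0 < k₂ < 1, r > 0, d > 0, and c ≥ 2·max{1, √(rd)}. Let λ₁ > λ₂ denote the two negative real roots of the quartic F₁, and set μ₂ = (c − √(c² + 4u*))/2. Then λ₂ < μ₂ < λ₁; consequently λ₁² − cλ₁ − u* < 0 and λ₂² − cλ₂ − u* > 0, so that τ₁ = (λ₁² − cλ₁ − u*)/(k₁u*) < 0 and τ₂ = (λ₂² − cλ₂ − u*)/(k₁u*) > 0. -/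
private lemma interlace_core (μ₂ m₁ l₁ l₂ p₁ p₂ q₁ q₂ K : ℝ)
    (hK : 0 < K) (e₁ : p₁ * q₁ = K) (e₂ : p₂ * q₂ = K)
    (hfac₁ : p₁ = (l₁ - μ₂) * (l₁ - m₁)) (hfac₂ : p₂ = (l₂ - μ₂) * (l₂ - m₁))
    (h₁ : l₁ < m₁) (h₂ : l₂ < m₁) (hlt : l₂ < l₁)
    (hpmono : p₁ < p₂) (hqmono : q₁ < q₂) :
    l₂ < μ₂ ∧ μ₂ < l₁ ∧ p₁ < 0 ∧ 0 < p₂ := by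
  have hp₁ne : p₁ ≠ 0 := by
    intro h; rw [h, zero_mul] at e₁; exact absurd e₁.symm (ne_of_gt hK)
  have hp₂ne : p₂ ≠ 0 := by
    intro h; rw [h, zero_mul] at e₂; exact absurd e₂.symm (ne_of_gt hK)
  have hp₁neg : p₁ < 0 := by
    by_contra h
    push_neg at h
    have hp₁pos : 0 < p₁ := lt_of_le_of_ne h (Ne.symm hp₁ne)
    have hq₁pos : 0 < q₁ := by nlinarith
    have hl₁μ : l₁ < μ₂ := by nlinarith
    have hp₂pos : 0 < p₂ := by nlinarith
    have hq₂pos : 0 < q₂ := by nlinarith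
    nlinarith [mul_pos hp₂pos (sub_pos.2 hqmono), mul_pos hq₁pos (sub_pos.2 hpmono)]
  have hp₂pos : 0 < p₂ := by
    by_contra h
    push_neg at h
    have hp₂neg : p₂ < 0 := lt_of_le_of_ne h hp₂ne
    have hq₂neg : q₂ < 0 := by nlinarith
    have hμl₂ : μ₂ < l₂ := by nlinarith
    have hp₁n : p₁ < 0 := hp₁neg
    have hq₁neg : q₁ < 0 := by nlinarith
    nlinarith [mul_pos (neg_pos.2 hp₂neg) (sub_pos.2 hqmono),
      mul_pos (neg_pos.2 hq₁neg) (sub_pos.2 hpmono)]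
  refine ⟨?_, ?_, hp₁neg, hp₂pos⟩
  · nlinarith
  · nlinarith

/-- If `λ₁ > λ₂` are the two negative real roots of the quartic `F₁` and
`μ₂ = (c − √(c² + 4u*))/2`, then `λ₂ < μ₂ < λ₁`; consequently
`λ₁² − cλ₁ − u* < 0` and `λ₂² − cλ₂ − u* > 0`, so `τ₁ < 0` and `τ₂ > 0`. -/
theorem negative_roots_interlace_mu
    (k₁ k₂ r d c : ℝ)
    (hk₁ : 0 < k₁) (hk₁' : k₁ < 1) (hk₂ : 0 < k₂) (hk₂' : k₂ < 1)
    (hr : 0 < r) (hd : 0 < d)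
    (hc : 2 * max 1 (Real.sqrt (r * d)) ≤ c)
    (ustar vstar : ℝ)
    (hust : ustar = (1 - k₁) / (1 - k₁ * k₂))
    (hvst : vstar = (1 - k₂) / (1 - k₁ * k₂))
    (F : ℝ → ℝ)
    (hF : ∀ lam : ℝ, F lam =
      lam ^ 4 - (c + c / d) * lam ^ 3
        + (c ^ 2 / d - ustar - r / d * vstar) * lam ^ 2
        + (r * c / d * vstar + c / d * ustar) * lam
        + r / d * (1 - k₁ * k₂) * ustar * vstar)
    (l₁ l₂ : ℝ) (hl₁ : F l₁ = 0) (hl₂ : F l₂ = 0)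
    (hl₁neg : l₁ < 0) (hl₂neg : l₂ < 0) (hlt : l₂ < l₁)
    (μ₂ τ₁ τ₂ : ℝ)
    (hμ₂ : μ₂ = (c - Real.sqrt (c ^ 2 + 4 * ustar)) / 2)
    (hτ₁ : τ₁ = (l₁ ^ 2 - c * l₁ - ustar) / (k₁ * ustar))
    (hτ₂ : τ₂ = (l₂ ^ 2 - c * l₂ - ustar) / (k₁ * ustar)) :
    l₂ < μ₂ ∧ μ₂ < l₁ ∧
    l₁ ^ 2 - c * l₁ - ustar < 0 ∧ 0 < l₂ ^ 2 - c * l₂ - ustar ∧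
    τ₁ < 0 ∧ 0 < τ₂ := by
  have hc2 : (2:ℝ) ≤ c := by
    have := le_max_left (1:ℝ) (Real.sqrt (r * d)); linarith
  have hkk : k₁ * k₂ < 1 := by nlinarith
  have hden : 0 < 1 - k₁ * k₂ := by linarith
  have hU : 0 < ustar := by rw [hust]; exact div_pos (by linarith) hden
  have hV : 0 < vstar := by rw [hvst]; exact div_pos (by linarith) hden
  have hKpos : 0 < r / d * (k₁ * k₂) * ustar * vstar := by positivity
  have e₁ : (l₁ ^ 2 - c * l₁ - ustar) * (l₁ ^ 2 - c / d * l₁ - r / d * vstar)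
      = r / d * (k₁ * k₂) * ustar * vstar := by
    have h := (hF l₁).symm.trans hl₁
    linear_combination h
  have e₂ : (l₂ ^ 2 - c * l₂ - ustar) * (l₂ ^ 2 - c / d * l₂ - r / d * vstar)
      = r / d * (k₁ * k₂) * ustar * vstar := by
    have h := (hF l₂).symm.trans hl₂
    linear_combination h
  have hs0 : (0:ℝ) ≤ c ^ 2 + 4 * ustar := by positivity
  have hs : Real.sqrt (c ^ 2 + 4 * ustar) ^ 2 = c ^ 2 + 4 * ustar := Real.sq_sqrt hs0
  have hsnn : (0:ℝ) ≤ Real.sqrt (c ^ 2 + 4 * ustar) := Real.sqrt_nonneg _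
  have hcs : c < Real.sqrt (c ^ 2 + 4 * ustar) :=
    (Real.lt_sqrt (by linarith)).2 (by linarith)
  have hfac₁ : l₁ ^ 2 - c * l₁ - ustar
      = (l₁ - μ₂) * (l₁ - (c + Real.sqrt (c ^ 2 + 4 * ustar)) / 2) := by
    rw [hμ₂]; linear_combination hs / 4
  have hfac₂ : l₂ ^ 2 - c * l₂ - ustar
      = (l₂ - μ₂) * (l₂ - (c + Real.sqrt (c ^ 2 + 4 * ustar)) / 2) := by
    rw [hμ₂]; linear_combination hs / 4
  have h₁ : l₁ < (c + Real.sqrt (c ^ 2 + 4 * ustar)) / 2 := by linarith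
  have h₂ : l₂ < (c + Real.sqrt (c ^ 2 + 4 * ustar)) / 2 := by linarith
  have hpmono : l₁ ^ 2 - c * l₁ - ustar < l₂ ^ 2 - c * l₂ - ustar := by
    have h3 := mul_pos_of_neg_of_neg (show l₂ - l₁ < 0 by linarith)
      (show l₂ + l₁ - c < 0 by linarith)
    have h4 : l₂ ^ 2 - c * l₂ - ustar - (l₁ ^ 2 - c * l₁ - ustar)
        = (l₂ - l₁) * (l₂ + l₁ - c) := by ring
    linarith
  have hqmono : l₁ ^ 2 - c / d * l₁ - r / d * vstar
      < l₂ ^ 2 - c / d * l₂ - r / d * vstar := by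
    have hcd : 0 < c / d := by positivity
    have h3 := mul_pos_of_neg_of_neg (show l₂ - l₁ < 0 by linarith)
      (show l₂ + l₁ - c / d < 0 by linarith)
    have h4 : l₂ ^ 2 - c / d * l₂ - r / d * vstar - (l₁ ^ 2 - c / d * l₁ - r / d * vstar)
        = (l₂ - l₁) * (l₂ + l₁ - c / d) := by ring
    linarith
  obtain ⟨A, B, C, D⟩ := interlace_core μ₂ ((c + Real.sqrt (c ^ 2 + 4 * ustar)) / 2)
    l₁ l₂ _ _ _ _ _ hKpos e₁ e₂ hfac₁ hfac₂ h₁ h₂ hlt hpmono hqmono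
  have hkU : 0 < k₁ * ustar := by positivity
  exact ⟨A, B, C, D, by rw [hτ₁]; exact div_neg_of_neg_of_pos C hkU,
    by rw [hτ₂]; exact div_pos D hkU⟩
end

section
/- Assume r > 0, d > 0 and c ≥ 2·max{1, √(rd)}. Then: (a) λ₃ = λ₄ = λ₅ > λ₆ if and only if c = 2, d = 2 − r, and d > 1; (b) λ₃ = λ₄ = λ₆ < λ₅ if and only if c = 2, d = 2 − r, and 0 < d < 1; (c) λ₃ = λ₄ = λ₅ = λ₆ if and only if c = 2 and d = r = 1. In particular, if c = 2 and d ≠ 2 − r then λ₃ = λ₄ ∉ {λ₅, λ₆}. -/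
set_option maxHeartbeats 1000000


/-- Remark 1: characterizations of the coincidences `λ₃ = λ₄ = λ₅`,
`λ₃ = λ₄ = λ₆` and `λ₃ = λ₄ = λ₅ = λ₆` among the roots of the quartic
`(λ²−cλ+1)(λ²−(c/d)λ+r/d)`. -/
theorem triple_root_characterization_c_eq_two
    (r d c : ℝ) (hr : 0 < r) (hd : 0 < d)
    (hc : 2 * max 1 (Real.sqrt (r * d)) ≤ c)
    (l₃ l₄ l₅ l₆ : ℝ)
    (h₃ : l₃ = (c + Real.sqrt (c ^ 2 - 4)) / 2)
    (h₄ : l₄ = (c - Real.sqrt (c ^ 2 - 4)) / 2)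
    (h₅ : l₅ = (c + Real.sqrt (c ^ 2 - 4 * r * d)) / (2 * d))
    (h₆ : l₆ = (c - Real.sqrt (c ^ 2 - 4 * r * d)) / (2 * d)) :
    ((l₃ = l₄ ∧ l₄ = l₅ ∧ l₆ < l₅) ↔ (c = 2 ∧ d = 2 - r ∧ 1 < d)) ∧
    ((l₃ = l₄ ∧ l₄ = l₆ ∧ l₆ < l₅) ↔ (c = 2 ∧ d = 2 - r ∧ 0 < d ∧ d < 1)) ∧
    ((l₃ = l₄ ∧ l₄ = l₅ ∧ l₅ = l₆) ↔ (c = 2 ∧ d = 1 ∧ r = 1)) ∧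
    (c = 2 → d ≠ 2 - r → l₃ = l₄ ∧ l₃ ≠ l₅ ∧ l₃ ≠ l₆) := by
  subst h₃ h₄ h₅ h₆
  set s := Real.sqrt (c ^ 2 - 4) with hs_def
  set t := Real.sqrt (c ^ 2 - 4 * r * d) with ht_def
  have hrd : (0:ℝ) ≤ r * d := by positivity
  have hc2 : (2:ℝ) ≤ c := by
    have h1 : (1:ℝ) ≤ max 1 (Real.sqrt (r * d)) := le_max_left _ _
    linarith
  have hc4 : (0:ℝ) ≤ c ^ 2 - 4 := by nlinarith
  have hcs : c ≥ 2 * Real.sqrt (r * d) := by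
    have := le_max_right 1 (Real.sqrt (r * d)); linarith
  have hcrd : (0:ℝ) ≤ c ^ 2 - 4 * r * d := by
    have h1 := Real.sq_sqrt hrd
    have h2 := Real.sqrt_nonneg (r * d)
    nlinarith
  have hs0 : 0 ≤ s := Real.sqrt_nonneg _
  have ht0 : 0 ≤ t := Real.sqrt_nonneg _
  have hs2 : s ^ 2 = c ^ 2 - 4 := Real.sq_sqrt hc4
  have ht2 : t ^ 2 = c ^ 2 - 4 * r * d := Real.sq_sqrt hcrd
  -- s = 0 ↔ c = 2
  have hsc : s = 0 ↔ c = 2 := by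
    constructor
    · intro h; nlinarith [hs2, h]
    · intro h; rw [hs_def, h]; norm_num
  -- l₃ = l₄ ↔ s = 0
  have h34 : (c + s) / 2 = (c - s) / 2 ↔ s = 0 := by constructor <;> intro h <;> linarith
  have hd' : (0:ℝ) < 2 * d := by linarith
  -- main equivalence: with c = 2, t = 2d - 2 ↔ (d = 2 - r ∧ 1 ≤ d)
  refine ⟨?_, ?_, ?_, ?_⟩
  · constructor
    · rintro ⟨h1, h2, h3⟩
      have hs : s = 0 := h34.mp h1
      have hc' : c = 2 := hsc.mp hs
      subst hc'
      rw [hs] at h2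
      -- (2 - 0)/2 = (2 + t)/(2d)  →  2d = 2 + t
      have h2' : 2 * d = 2 + t := by
        field_simp at h2; linarith
      have ht' : t = 2 * d - 2 := by linarith
      have hdr : d = 2 - r := by
        have key : d * (d - 2 + r) = 0 := by nlinarith [ht2, ht']
        rcases mul_eq_zero.mp key with h | h
        · exact absurd h (ne_of_gt hd)
        · linarith
      have htpos : 0 < t := by
        by_contra h
        push_neg at h
        have : t = 0 := le_antisymm h ht0
        rw [this] at h3; simp at h3
      refine ⟨rfl, hdr, by linarith⟩
    · rintro ⟨hc', hdr, hd1⟩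
      subst hc'
      have hs : s = 0 := hsc.mpr rfl
      have ht' : t = 2 * (d - 1) := by
        rw [ht_def, show (2:ℝ) ^ 2 - 4 * r * d = (2 * (d - 1)) ^ 2 by rw [hdr]; ring]
        exact Real.sqrt_sq (by linarith)
      rw [hs, ht']
      refine ⟨by ring, ?_, ?_⟩
      · field_simp; ring
      · rw [div_lt_div_iff₀ hd' hd']; nlinarith
  · constructor
    · rintro ⟨h1, h2, h3⟩
      have hs : s = 0 := h34.mp h1
      have hc' : c = 2 := hsc.mp hs
      subst hc'
      rw [hs] at h2
      have h2' : 2 * d = 2 - t := by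
        field_simp at h2; linarith
      have ht' : t = 2 - 2 * d := by linarith
      have hdr : d = 2 - r := by
        have key : d * (d - 2 + r) = 0 := by nlinarith [ht2, ht']
        rcases mul_eq_zero.mp key with h | h
        · exact absurd h (ne_of_gt hd)
        · linarith
      have htpos : 0 < t := by
        by_contra h
        push_neg at h
        have : t = 0 := le_antisymm h ht0
        rw [this] at h3; simp at h3
      refine ⟨rfl, hdr, hd, by linarith⟩
    · rintro ⟨hc', hdr, _, hd1⟩
      subst hc'
      have hs : s = 0 := hsc.mpr rfl
      have ht' : t = 2 * (1 - d) := by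
        rw [ht_def, show (2:ℝ) ^ 2 - 4 * r * d = (2 * (1 - d)) ^ 2 by rw [hdr]; ring]
        exact Real.sqrt_sq (by linarith)
      rw [hs, ht']
      refine ⟨by ring, ?_, ?_⟩
      · field_simp; ring
      · rw [div_lt_div_iff₀ hd' hd']; nlinarith
  · constructor
    · rintro ⟨h1, h2, h3⟩
      have hs : s = 0 := h34.mp h1
      have hc' : c = 2 := hsc.mp hs
      subst hc'
      have ht' : t = 0 := by
        rw [div_eq_div_iff (ne_of_gt hd') (ne_of_gt hd')] at h3; nlinarith
      rw [hs, ht'] at h2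
      have hd1 : d = 1 := by
        field_simp at h2; linarith
      have hr1 : r = 1 := by nlinarith [ht2, ht', hd1]
      exact ⟨rfl, hd1, hr1⟩
    · rintro ⟨hc', hd1, hr1⟩
      subst hc' hd1 hr1
      have hs : s = 0 := hsc.mpr rfl
      have ht' : t = 0 := by rw [ht_def]; norm_num
      rw [hs, ht']; norm_num
  · intro hc' hdr
    subst hc'
    have hs : s = 0 := hsc.mpr rfl
    rw [hs]
    refine ⟨by norm_num, ?_, ?_⟩
    · intro h
      have h2' : 2 * d = 2 + t := by field_simp at h; linarith
      have ht' : t = 2 * d - 2 := by linarith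
      have key : d * (d - 2 + r) = 0 := by nlinarith [ht2, ht']
      rcases mul_eq_zero.mp key with h | h
      · exact absurd h (ne_of_gt hd)
      · exact hdr (by linarith)
    · intro h
      have h2' : 2 * d = 2 - t := by field_simp at h; linarith
      have ht' : t = 2 - 2 * d := by linarith
      have key : d * (d - 2 + r) = 0 := by nlinarith [ht2, ht']
      rcases mul_eq_zero.mp key with h | h
      · exact absurd h (ne_of_gt hd)
      · exact hdr (by linarith)
end

section
/- Let 0 < k₁ < 1, 0 < k₂ < 1, and suppose c = 2 and d = r = 1 (so that λ₃ = λ₄ = λ₅ = λ₆ = 1). Let (φ, ψ) be a traveling front of (LV) connecting (0,0) and (u*, v*) with speed c = 2. Then there exist α, β, γ, σ with β ≥ 0, σ ≥ 0, α > 0 if β = 0, and γ > 0 if σ = 0, such that as ξ → −∞, φ(ξ) = α e^{ξ} − β ξ e^{ξ} + h.o.t. and ψ(ξ) = γ e^{ξ} − σ ξ e^{ξ} + h.o.t., in the sense that if β > 0 then φ(ξ)/(−ξ e^{ξ}) → β, while if β = 0 then φ(ξ)e^{−ξ} → α; and if σ > 0 then ψ(ξ)/(−ξ e^{ξ}) →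 σ, while if σ = 0 then ψ(ξ)e^{−ξ} → γ. -/
open Filter Topology Set

private lemma hasDerivAt_fix {f : ℝ → ℝ} {a b x : ℝ} (h : HasDerivAt f a x) (e : a = b) :
    HasDerivAt f b x := e ▸ h

/-- If `deriv h ≤ -κ` on `[a,c]`, then `h c ≤ h a - κ (c - a)`. -/
private lemma decrease_on_interval {h : ℝ → ℝ} {a c κ : ℝ} (hd : Differentiable ℝ h)
    (hac : a ≤ c) (hder : ∀ t, a ≤ t → t ≤ c → deriv h t ≤ -κ) :
    h c ≤ h a - κ * (c - a) := by
  have hanti : AntitoneOn (fun t => h t + κ * t) (Icc a c) := by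
    apply antitoneOn_of_deriv_nonpos (convex_Icc a c)
    · exact (hd.continuous.add (continuous_const.mul continuous_id)).continuousOn
    · exact ((hd.add ((differentiable_id.const_mul κ))).differentiableOn)
    · intro x hx
      rw [interior_Icc] at hx
      have hx' : HasDerivAt (fun t => h t + κ * t) (deriv h x + κ * 1) x :=
        (hd x).hasDerivAt.add ((hasDerivAt_id x).const_mul κ)
      rw [hx'.deriv]
      have := hder x hx.1.le hx.2.le
      linarith
  have := hanti (left_mem_Icc.2 hac) (right_mem_Icc.2 hac) hac
  simp only at this
  linarith

/-- Barrier lemma: if `h a < θ` and `deriv h ≤ -κ` whenever `h ≤ θ` on `[a,b]`, then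
`h b ≤ h a - κ(b-a)`. -/
private lemma barrier {h : ℝ → ℝ} {a b θ κ : ℝ} (hd : Differentiable ℝ h)
    (hκ : 0 < κ) (hab : a ≤ b) (hstart : h a < θ)
    (hstep : ∀ t, a ≤ t → t ≤ b → h t ≤ θ → deriv h t ≤ -κ) :
    h b ≤ h a - κ * (b - a) := by
  have claim : ∀ t, a ≤ t → t ≤ b → h t < θ := by
    by_contra hcon
    push_neg at hcon
    obtain ⟨t₀, ht₀a, ht₀b, ht₀⟩ := hcon
    set E : Set ℝ := Icc a b ∩ {x | θ ≤ h x} with hE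
    have hEne : E.Nonempty := ⟨t₀, ⟨ht₀a, ht₀b⟩, ht₀⟩
    have hEclosed : IsClosed E := isClosed_Icc.inter (isClosed_le continuous_const hd.continuous)
    have hEbdd : BddBelow E := ⟨a, fun x hx => hx.1.1⟩
    set c := sInf E with hc
    have hcE : c ∈ E := hEclosed.csInf_mem hEne hEbdd
    have hac : a ≤ c := hcE.1.1
    have hcb : c ≤ b := hcE.1.2
    have hane : a < c := by
      refine lt_of_le_of_ne hac (fun he => ?_)
      exact absurd (he ▸ hcE.2) (not_le.2 hstart)
    have hlt : ∀ s, a ≤ s → s < c → h s < θ := by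
      intro s hsa hsc
      by_contra hns
      push_neg at hns
      have : c ≤ s := csInf_le hEbdd ⟨⟨hsa, le_trans hsc.le hcb⟩, hns⟩
      exact absurd this (not_le.2 hsc)
    have hhc : h c ≤ θ := by
      have htend : Tendsto h (𝓝[<] c) (𝓝 (h c)) :=
        (hd.continuous.continuousAt (x := c)).continuousWithinAt.tendsto
      have hev : ∀ᶠ s in 𝓝[<] c, h s ≤ θ := by
        filter_upwards [Ioo_mem_nhdsLT hane] with s hs
        exact (hlt s hs.1.le hs.2).le
      have : NeBot (𝓝[<] c) := nhdsLT_neBot c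
      exact le_of_tendsto htend hev
    have hle : ∀ t, a ≤ t → t ≤ c → h t ≤ θ := by
      intro t hta htc
      rcases lt_or_eq_of_le htc with h' | rfl
      · exact (hlt t hta h').le
      · exact hhc
    have := decrease_on_interval hd hac
      (fun t h1 h2 => hstep t h1 (le_trans h2 hcb) (hle t h1 h2))
    have h0 : 0 ≤ κ * (c - a) := mul_nonneg hκ.le (by linarith)
    have : h c < θ := by linarith
    exact absurd hcE.2 (not_le.2 this)
  exact decrease_on_interval hd hab
    (fun t h1 h2 => hstep t h1 h2 (claim t h1 h2).le)

/-- Exponential decay with rate 9/10 at `-∞` for a positive increasing solution of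
`f'' - 2f' + (1-f-p)f = 0` with `f, p → 0`. -/
private lemma decay_tail {f p : ℝ → ℝ} (hf : ContDiff ℝ 2 f)
    (hfpos : ∀ ξ, 0 < f ξ) (hf'pos : ∀ ξ, 0 < deriv f ξ)
    (hppos : ∀ ξ, 0 ≤ p ξ)
    (hEq : ∀ ξ, deriv (deriv f) ξ - 2 * deriv f ξ + (1 - f ξ - p ξ) * f ξ = 0)
    (hf0 : Tendsto f atBot (𝓝 0)) (hp0 : Tendsto p atBot (𝓝 0)) :
    ∃ C M : ℝ, 0 < C ∧ ∀ ξ ≤ M, f ξ ≤ C * Real.exp ((9/10) * ξ) := by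
  have hd1 : Differentiable ℝ f := hf.differentiable (by norm_num)
  have hd2 : Differentiable ℝ (deriv f) := by
    have h2 : ContDiff ℝ (1 + 1 : ℕ∞) f := by
      have : ((2:ℕ∞)) = 1 + 1 := by norm_num
      exact this ▸ hf
    exact (((contDiff_succ_iff_deriv (n := 1)).mp (by exact_mod_cast h2)).2.2).differentiable (by norm_num)
  -- tail where f + p < 1/400
  have hsum : Tendsto (fun ξ => f ξ + p ξ) atBot (𝓝 (0 + 0)) := hf0.add hp0
  rw [add_zero] at hsum
  have hev : ∀ᶠ ξ in atBot, f ξ + p ξ < 1/400 :=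
    hsum.eventually_lt_const (by norm_num)
  obtain ⟨M, hM⟩ := eventually_atBot.mp hev
  set ρ : ℝ → ℝ := fun ξ => deriv f ξ / f ξ with hρdef
  have hρ : ∀ ξ, HasDerivAt ρ
      ((deriv (deriv f) ξ * f ξ - deriv f ξ * deriv f ξ) / (f ξ)^2) ξ :=
    fun ξ => ((hd2 ξ).hasDerivAt).div ((hd1 ξ).hasDerivAt) (hfpos ξ).ne'
  have hρd : Differentiable ℝ ρ := fun ξ => (hρ ξ).differentiableAt
  have hρpos : ∀ ξ, 0 < ρ ξ := fun ξ => div_pos (hf'pos ξ) (hfpos ξ)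
  have key : ∀ t, t ≤ M → ρ t ≤ 9/10 → deriv ρ t ≤ -(3/400) := by
    intro t ht hρt
    rw [(hρ t).deriv]
    have e2 : deriv (deriv f) t = 2 * deriv f t - (1 - f t - p t) * f t := by
      linarith [hEq t]
    have hft := hfpos t
    have hf't := hf'pos t
    have hpt := hppos t
    have hsumt := hM t ht
    have hρle : deriv f t ≤ (9/10) * f t := by
      rw [hρdef] at hρt
      have := (div_le_iff₀ hft).mp hρt
      linarith
    rw [e2, div_le_iff₀ (by positivity : (0:ℝ) < f t ^ 2)]
    have h1 : f t / 10 ≤ f t - deriv f t := by linarith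
    have h2 : (f t / 10)^2 ≤ (f t - deriv f t)^2 :=
      pow_le_pow_left₀ (by positivity) h1 2
    nlinarith [mul_pos hft hft, hsumt]
  have hρbig : ∀ ξ, ξ ≤ M - 400 → (9:ℝ)/10 ≤ ρ ξ := by
    intro ξ₁ hξ₁
    by_contra hlt
    push_neg at hlt
    have hb := barrier hρd (show (0:ℝ) < 3/400 by norm_num)
      (show ξ₁ ≤ ξ₁ + 400 by linarith) hlt
      (fun t h1 h2 h3 => key t (by linarith) h3)
    have := hρpos (ξ₁ + 400)
    have hρlt : ρ ξ₁ < 9/10 := hlt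
    norm_num at hb
    linarith
  -- f e^{-0.9 ξ} is monotone on the tail
  set M' := M - 400 with hM'
  set P : ℝ → ℝ := fun ξ => f ξ * Real.exp (-(9/10) * ξ) with hP
  have hPd : ∀ ξ, HasDerivAt P
      ((deriv f ξ - (9/10) * f ξ) * Real.exp (-(9/10) * ξ)) ξ := by
    intro ξ
    have hexp : HasDerivAt (fun x : ℝ => Real.exp (-(9/10) * x))
        (Real.exp (-(9/10) * ξ) * (-(9/10) * 1)) ξ :=
      ((hasDerivAt_id ξ).const_mul (-(9/10))).exp
    have := (hd1 ξ).hasDerivAt.mul hexp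
    exact hasDerivAt_fix this (by ring)
  have hPmono : MonotoneOn P (Iic M') := by
    apply monotoneOn_of_deriv_nonneg (convex_Iic M')
    · exact (Differentiable.continuous (fun ξ => (hPd ξ).differentiableAt)).continuousOn
    · exact (fun ξ (_ : ξ ∈ interior (Iic M')) => ((hPd ξ).differentiableAt).differentiableWithinAt)
    · intro x hx
      rw [interior_Iic] at hx
      rw [(hPd x).deriv]
      have h9 : (9:ℝ)/10 ≤ ρ x := hρbig x hx.le
      have : (9/10) * f x ≤ deriv f x := by
        rw [hρdef] at h9
        exact (le_div_iff₀ (hfpos x)).mp h9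
      have := Real.exp_pos (-(9/10) * x)
      nlinarith
  refine ⟨P M', M', mul_pos (hfpos M') (Real.exp_pos _), fun ξ hξ => ?_⟩
  have h1 : P ξ ≤ P M' := hPmono (mem_Iic.2 hξ) (mem_Iic.2 le_rfl) hξ
  have h2 : f ξ = P ξ * Real.exp ((9/10) * ξ) := by
    rw [hP]
    simp only
    rw [mul_assoc, ← Real.exp_add]
    norm_num
  rw [h2]
  exact mul_le_mul_of_nonneg_right h1 (Real.exp_pos _).le


/-- Main tail analysis for one component. -/
private lemma tail_main {f p : ℝ → ℝ} {Cq Mq : ℝ} (hf : ContDiff ℝ 2 f)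
    (hfpos : ∀ ξ, 0 < f ξ) (hppos : ∀ ξ, 0 ≤ p ξ)
    (hEq : ∀ ξ, deriv (deriv f) ξ - 2 * deriv f ξ + (1 - f ξ - p ξ) * f ξ = 0)
    (hCq : 0 < Cq) (hq : ∀ ξ ≤ Mq, f ξ + p ξ ≤ Cq * Real.exp ((9/10) * ξ)) :
    ∃ α β : ℝ, 0 ≤ β ∧ (β = 0 → 0 < α) ∧
      (0 < β → Tendsto (fun ξ : ℝ => f ξ / (-ξ * Real.exp (1 * ξ))) atBot (𝓝 β)) ∧
      (β = 0 → Tendsto (fun ξ : ℝ => f ξ * Real.exp (-1 * ξ)) atBot (𝓝 α)) := by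
  have hd1 : Differentiable ℝ f := hf.differentiable (by norm_num)
  have hd2 : Differentiable ℝ (deriv f) := by
    have h2 : ContDiff ℝ (1 + 1 : ℕ∞) f := by
      have : ((2:ℕ∞)) = 1 + 1 := by norm_num
      exact this ▸ hf
    exact (((contDiff_succ_iff_deriv (n := 1)).mp (by exact_mod_cast h2)).2.2).differentiable (by norm_num)
  set w : ℝ → ℝ := fun ξ => f ξ * Real.exp (-ξ) with hwdef
  set w' : ℝ → ℝ := fun ξ => (deriv f ξ - f ξ) * Real.exp (-ξ) with hw'def
  have hexp : ∀ ξ : ℝ, HasDerivAt (fun x : ℝ => Real.exp (-x)) (-Real.exp (-ξ)) ξ := by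
    intro ξ
    have h0 : HasDerivAt (fun x : ℝ => -x) (-1 : ℝ) ξ := (hasDerivAt_id ξ).neg
    exact hasDerivAt_fix h0.exp (by ring)
  have hw : ∀ ξ, HasDerivAt w (w' ξ) ξ := by
    intro ξ
    have := (hd1 ξ).hasDerivAt.mul (hexp ξ)
    exact hasDerivAt_fix this (by simp only [hw'def]; ring)
  have hw' : ∀ ξ, HasDerivAt w' ((f ξ + p ξ) * w ξ) ξ := by
    intro ξ
    have h0 := ((hd2 ξ).hasDerivAt.sub (hd1 ξ).hasDerivAt).mul (hexp ξ)
    refine hasDerivAt_fix h0 ?_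
    have e2 : deriv (deriv f) ξ = 2 * deriv f ξ - (1 - f ξ - p ξ) * f ξ := by
      linarith [hEq ξ]
    simp only [hwdef]
    rw [e2]; simp only [Pi.sub_apply]; ring
  have hwpos : ∀ ξ, 0 < w ξ := fun ξ => mul_pos (hfpos ξ) (Real.exp_pos _)
  have hqpos : ∀ ξ, 0 < f ξ + p ξ := fun ξ => add_pos_of_pos_of_nonneg (hfpos ξ) (hppos ξ)
  have hw'mono : StrictMono w' :=
    strictMono_of_hasDerivAt_pos hw' (fun ξ => mul_pos (hqpos ξ) (hwpos ξ))
  -- lower bound for w' via a comparison function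
  set Z : ℝ → ℝ := fun ξ => w' ξ - (5/4) * Cq^2 * Real.exp ((4/5) * ξ) with hZdef
  have hZ : ∀ ξ, HasDerivAt Z ((f ξ + p ξ) * w ξ - Cq^2 * Real.exp ((4/5) * ξ)) ξ := by
    intro ξ
    have hexp2 : HasDerivAt (fun x : ℝ => Real.exp ((4/5) * x))
        (Real.exp ((4/5) * ξ) * ((4/5) * 1)) ξ :=
      ((hasDerivAt_id ξ).const_mul ((4:ℝ)/5)).exp
    have := (hw' ξ).sub (hexp2.const_mul ((5/4) * Cq^2))
    exact hasDerivAt_fix this (by ring)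
  have hprod : ∀ x ≤ Mq, (f x + p x) * w x ≤ Cq^2 * Real.exp ((4/5) * x) := by
    intro x hx
    have h1 : f x + p x ≤ Cq * Real.exp ((9/10) * x) := hq x hx
    have hfle : f x ≤ Cq * Real.exp ((9/10) * x) := by linarith [hppos x]
    have h2 : (f x + p x) * f x ≤ (Cq * Real.exp ((9/10) * x)) * (Cq * Real.exp ((9/10) * x)) :=
      mul_le_mul h1 hfle (hfpos x).le (by positivity)
    have h3 : (f x + p x) * w x ≤
        (Cq * Real.exp ((9/10) * x)) * (Cq * Real.exp ((9/10) * x)) * Real.exp (-x) := by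
      have : (f x + p x) * w x = ((f x + p x) * f x) * Real.exp (-x) := by
        simp only [hwdef]; ring
      rw [this]
      exact mul_le_mul_of_nonneg_right h2 (Real.exp_pos _).le
    have h4 : (Cq * Real.exp ((9/10) * x)) * (Cq * Real.exp ((9/10) * x)) * Real.exp (-x)
        = Cq^2 * Real.exp ((4/5) * x) := by
      rw [show (Cq * Real.exp ((9/10) * x)) * (Cq * Real.exp ((9/10) * x)) * Real.exp (-x)
          = Cq^2 * (Real.exp ((9/10) * x) * Real.exp ((9/10) * x) * Real.exp (-x)) by ring]
      rw [← Real.exp_add, ← Real.exp_add]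
      have he : (9:ℝ)/10*x + 9/10*x + -x = 4/5*x := by ring
      rw [he]
    rw [h4] at h3
    exact h3
  have hZanti : AntitoneOn Z (Iic Mq) := by
    apply antitoneOn_of_deriv_nonpos (convex_Iic Mq)
    · exact (Differentiable.continuous (fun ξ => (hZ ξ).differentiableAt)).continuousOn
    · exact fun ξ _ => ((hZ ξ).differentiableAt).differentiableWithinAt
    · intro x hx
      rw [interior_Iic] at hx
      rw [(hZ x).deriv]
      linarith [hprod x hx.le]
  have hw'lb : ∀ ξ, Z Mq ≤ w' ξ := by
    intro ξ
    rcases le_total ξ Mq with h | h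
    · have h1 : Z Mq ≤ Z ξ := hZanti (mem_Iic.2 h) (mem_Iic.2 le_rfl) h
      have h2 : Z ξ ≤ w' ξ := by
        simp only [hZdef]
        have : (0:ℝ) ≤ (5/4) * Cq^2 * Real.exp ((4/5) * ξ) := by positivity
        linarith
      linarith
    · have h1 : w' Mq ≤ w' ξ := hw'mono.monotone h
      have h2 : Z Mq ≤ w' Mq := by
        simp only [hZdef]
        have : (0:ℝ) ≤ (5/4) * Cq^2 * Real.exp ((4/5) * Mq) := by positivity
        linarith
      linarith
  have hbdd : BddBelow (Set.range w') := ⟨Z Mq, by rintro x ⟨ξ, rfl⟩; exact hw'lb ξ⟩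
  set m := ⨅ ξ, w' ξ with hmdef
  have htendw' : Tendsto w' atBot (𝓝 m) := tendsto_atBot_ciInf hw'mono.monotone hbdd
  have hmle : ∀ ξ, m ≤ w' ξ := fun ξ => ciInf_le hbdd ξ
  have hm0 : m ≤ 0 := by
    by_contra hcon
    push_neg at hcon
    have hmono : Monotone (fun ξ => w ξ - m * ξ) := by
      apply monotone_of_hasDerivAt_nonneg
        (f' := fun ξ => w' ξ - m * 1)
        (fun ξ => (hw ξ).sub ((hasDerivAt_id ξ).const_mul m))
      intro ξ
      simp only [mul_one, Pi.zero_apply, sub_nonneg]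
      exact hmle ξ
    set ξ₀ := -(w 0 + 1) / m with hξ₀def
    have hξ₀ : ξ₀ ≤ 0 := le_of_lt (div_neg_of_neg_of_pos (by linarith [hwpos 0]) hcon)
    have h1 := hmono hξ₀
    simp only at h1
    have h2 : m * ξ₀ = -(w 0 + 1) := by
      rw [hξ₀def]
      field_simp
    have := hwpos ξ₀
    nlinarith [hwpos 0]
  rcases eq_or_lt_of_le hm0 with hm | hm
  · -- case m = 0 : β = 0, limit α > 0
    have hw'pos : ∀ ξ, 0 < w' ξ := by
      intro ξ
      have h1 : (0:ℝ) ≤ w' (ξ - 1) := hm ▸ hmle (ξ - 1)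
      exact lt_of_le_of_lt h1 (hw'mono (by linarith))
    have hwmono : Monotone w :=
      monotone_of_hasDerivAt_nonneg hw (fun ξ => (hw'pos ξ).le)
    have hwbdd : BddBelow (Set.range w) := ⟨0, by rintro x ⟨ξ, rfl⟩; exact (hwpos ξ).le⟩
    set α := ⨅ ξ, w ξ with hαdef
    have htw : Tendsto w atBot (𝓝 α) := tendsto_atBot_ciInf hwmono hwbdd
    have hw'le : ∀ ξ ≤ Mq, w' ξ ≤ (10/9) * Cq * Real.exp ((9/10) * ξ) * w ξ := by
      intro ξ hξ
      set Y : ℝ → ℝ := fun s => w' s - w ξ * ((10/9) * Cq) * Real.exp ((9/10) * s) with hYdef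
      have hY : ∀ s, HasDerivAt Y
          ((f s + p s) * w s - w ξ * Cq * Real.exp ((9/10) * s)) s := by
        intro s
        have hexp2 : HasDerivAt (fun x : ℝ => Real.exp ((9/10) * x))
            (Real.exp ((9/10) * s) * ((9/10) * 1)) s :=
          ((hasDerivAt_id s).const_mul ((9:ℝ)/10)).exp
        have := (hw' s).sub (hexp2.const_mul (w ξ * ((10/9) * Cq)))
        exact hasDerivAt_fix this (by ring)
      have hYanti : AntitoneOn Y (Iic ξ) := by
        apply antitoneOn_of_deriv_nonpos (convex_Iic ξ)
        · exact (Differentiable.continuous (fun s => (hY s).differentiableAt)).continuousOn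
        · exact fun s _ => ((hY s).differentiableAt).differentiableWithinAt
        · intro s hs
          rw [interior_Iic] at hs
          rw [(hY s).deriv]
          have h1 : f s + p s ≤ Cq * Real.exp ((9/10) * s) := hq s (le_trans hs.le hξ)
          have h2 : w s ≤ w ξ := hwmono hs.le
          have h3 : (f s + p s) * w s ≤ (Cq * Real.exp ((9/10) * s)) * w ξ :=
            mul_le_mul h1 h2 (hwpos s).le (by positivity)
          nlinarith
      have hkey : ∀ a ≤ ξ, Y ξ ≤ w' a := by
        intro a ha
        have h1 : Y ξ ≤ Y a := hYanti (mem_Iic.2 ha) (mem_Iic.2 le_rfl) ha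
        have h2 : Y a ≤ w' a := by
          simp only [hYdef]
          have : (0:ℝ) ≤ w ξ * ((10/9) * Cq) * Real.exp ((9/10) * a) :=
            mul_nonneg (mul_nonneg (hwpos ξ).le (by positivity)) (Real.exp_pos _).le
          linarith
        linarith
      have h0 : Y ξ ≤ m := ge_of_tendsto htendw' (eventually_atBot.mpr ⟨ξ, hkey⟩)
      rw [hm] at h0
      simp only [hYdef] at h0
      nlinarith
    -- lower bound for w on the tail via a Gronwall-type comparison
    set H : ℝ → ℝ := fun ξ => (100/81) * Cq * Real.exp ((9/10) * ξ) with hHdef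
    set V : ℝ → ℝ := fun ξ => w ξ * Real.exp (-(H ξ)) with hVdef
    have hH : ∀ ξ, HasDerivAt H ((10/9) * Cq * Real.exp ((9/10) * ξ)) ξ := by
      intro ξ
      have hexp2 : HasDerivAt (fun x : ℝ => Real.exp ((9/10) * x))
          (Real.exp ((9/10) * ξ) * ((9/10) * 1)) ξ :=
        ((hasDerivAt_id ξ).const_mul ((9:ℝ)/10)).exp
      exact hasDerivAt_fix (hexp2.const_mul ((100/81) * Cq)) (by ring)
    have hV : ∀ ξ, HasDerivAt V
        ((w' ξ - (10/9) * Cq * Real.exp ((9/10) * ξ) * w ξ) * Real.exp (-(H ξ))) ξ := by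
      intro ξ
      have h1 : HasDerivAt (fun x => Real.exp (-(H x)))
          (Real.exp (-(H ξ)) * (-((10/9) * Cq * Real.exp ((9/10) * ξ)))) ξ :=
        ((hH ξ).neg).exp
      have := (hw ξ).mul h1
      exact hasDerivAt_fix this (by ring)
    have hVanti : AntitoneOn V (Iic Mq) := by
      apply antitoneOn_of_deriv_nonpos (convex_Iic Mq)
      · exact (Differentiable.continuous (fun ξ => (hV ξ).differentiableAt)).continuousOn
      · exact fun ξ _ => ((hV ξ).differentiableAt).differentiableWithinAt
      · intro x hx
        rw [interior_Iic] at hx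
        rw [(hV x).deriv]
        have h1 := hw'le x hx.le
        have h2 : (0:ℝ) < Real.exp (-(H x)) := Real.exp_pos _
        nlinarith
    have hVlb : ∀ ξ ≤ Mq, V Mq ≤ w ξ := by
      intro ξ hξ
      have h1 : V Mq ≤ V ξ := hVanti (mem_Iic.2 hξ) (mem_Iic.2 le_rfl) hξ
      have h2 : V ξ ≤ w ξ := by
        simp only [hVdef]
        have hH0 : (0:ℝ) ≤ H ξ := by
          simp only [hHdef]
          positivity
        have : Real.exp (-(H ξ)) ≤ 1 := Real.exp_le_one_iff.mpr (by linarith)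
        have := hwpos ξ
        nlinarith
      linarith
    have hVpos : 0 < V Mq := mul_pos (hwpos Mq) (Real.exp_pos _)
    have hα : V Mq ≤ α := ge_of_tendsto htw (eventually_atBot.mpr ⟨Mq, hVlb⟩)
    have hαpos : 0 < α := lt_of_lt_of_le hVpos hα
    refine ⟨α, 0, le_rfl, fun _ => hαpos, fun h => absurd h (lt_irrefl 0), fun _ => ?_⟩
    have : (fun ξ : ℝ => f ξ * Real.exp (-1 * ξ)) = w := by
      funext ξ
      simp only [hwdef, neg_one_mul]
    rw [this]
    exact htw
  · -- case m < 0 : β = -m > 0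
    clear_value m
    set β := -m with hβdef
    have hβpos : 0 < β := neg_pos.2 hm
    clear_value β
    refine ⟨1, β, hβpos.le, fun h => absurd h hβpos.ne', fun _ => ?_, fun h => absurd h hβpos.ne'⟩
    have hrw : ∀ ξ : ℝ, f ξ / (-ξ * Real.exp (1 * ξ)) = w ξ / (-ξ) := by
      intro ξ
      simp only [hwdef, one_mul, Real.exp_neg]
      ring
    have hmain : Tendsto (fun ξ : ℝ => w ξ / (-ξ)) atBot (𝓝 β) := by
      rw [Metric.tendsto_nhds]
      intro ε hε
      rw [eventually_atBot]
      -- choose T with w' < m + ε/4 below T, and T ≤ -1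
      obtain ⟨T₀, hT₀⟩ := eventually_atBot.mp
        (htendw'.eventually_lt_const (show m < m + ε/4 by linarith))
      set T := min T₀ (-1) with hTdef
      have hT1 : T ≤ -1 := min_le_right _ _
      have hTs : ∀ s ≤ T, w' s < m + ε/4 := fun s hs => hT₀ s (le_trans hs (min_le_left _ _))
      -- upper estimate: w ξ ≤ w T + m (ξ - T)
      have hup : Monotone (fun ξ => w ξ - m * ξ) := by
        apply monotone_of_hasDerivAt_nonneg
          (f' := fun ξ => w' ξ - m * 1)
          (fun ξ => (hw ξ).sub ((hasDerivAt_id ξ).const_mul m))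
        intro ξ
        simp only [mul_one, Pi.zero_apply, sub_nonneg]
        exact hmle ξ
      -- lower estimate on the tail: w ξ ≥ w T + (m + ε/4)(ξ - T)
      have hdnder : ∀ x : ℝ, HasDerivAt (fun ξ => w ξ - (m + ε/4) * ξ)
          (w' x - (m + ε/4)) x := by
        intro x
        have := (hw x).sub ((hasDerivAt_id x).const_mul (m + ε/4))
        exact hasDerivAt_fix this (by ring)
      have hdn : AntitoneOn (fun ξ => w ξ - (m + ε/4) * ξ) (Iic T) := by
        apply antitoneOn_of_deriv_nonpos (convex_Iic T)
        · exact (Differentiable.continuous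
            (fun ξ => (hdnder ξ).differentiableAt)).continuousOn
        · exact fun ξ _ => ((hdnder ξ).differentiableAt).differentiableWithinAt
        · intro x hx
          rw [interior_Iic] at hx
          rw [(hdnder x).deriv]
          have := hTs x hx.le
          linarith
      set K := |w T - m * T| + |w T - (m + ε/4) * T| + 1 with hKdef
      clear_value K
      have hK1 : (1:ℝ) ≤ K := by
        have := abs_nonneg (w T - m * T)
        have := abs_nonneg (w T - (m + ε/4) * T)
        simp only [hKdef]
        linarith
      have hKpos : (0:ℝ) < K := by linarith
      refine ⟨min T (-(4 * K / ε)), fun ξ hξ => ?_⟩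
      have hξT : ξ ≤ T := le_trans hξ (min_le_left _ _)
      have hξK : ξ ≤ -(4 * K / ε) := le_trans hξ (min_le_right _ _)
      set t := -ξ with htdef
      clear_value t
      have htpos : 0 < t := by
        simp only [htdef]
        linarith
      have htK : 4 * K / ε ≤ t := by
        simp only [htdef]; linarith
      have hεt : 4 * K ≤ ε * t := by
        rw [div_le_iff₀ hε] at htK
        linarith
      -- upper bound : w ξ - β * t ≤ K
      have h1 : w ξ - m * ξ ≤ w T - m * T := hup hξT
      have hub : w ξ - β * t ≤ K := by
        have hmξ : m * ξ = β * t := by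
          simp only [hβdef, htdef]; ring
        have : w ξ - β * t ≤ w T - m * T := by rw [← hmξ]; linarith
        have habs := le_abs_self (w T - m * T)
        simp only [hKdef]
        have := abs_nonneg (w T - (m + ε/4) * T)
        linarith
      -- lower bound : w ξ - β * t ≥ -K - (ε/4) t
      have h2 : w T - (m + ε/4) * T ≤ w ξ - (m + ε/4) * ξ :=
        hdn (mem_Iic.2 hξT) (mem_Iic.2 le_rfl) hξT
      have hlb : -K - (ε/4) * t ≤ w ξ - β * t := by
        have hmξ : (m + ε/4) * ξ = β * t - (ε/4) * t := by
          simp only [hβdef, htdef]; ring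
        have h3 : w T - (m + ε/4) * T ≤ w ξ - β * t + (ε/4) * t := by
          linarith [h2, hmξ]
        have habs := neg_abs_le (w T - (m + ε/4) * T)
        simp only [hKdef]
        have := abs_nonneg (w T - m * T)
        linarith
      have hK4 : K ≤ ε * t / 4 := by linarith
      have habs : |w ξ - β * t| < ε * t := by
        apply abs_lt.mpr
        constructor
        · have : (0:ℝ) < ε * t := mul_pos hε htpos
          linarith
        · have : (0:ℝ) < ε * t := mul_pos hε htpos
          linarith
      have hdiv : w ξ / t - β = (w ξ - β * t) / t := by
        field_simp
      rw [Real.dist_eq, hdiv, abs_div, abs_of_pos htpos, div_lt_iff₀ htpos]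
      linarith
    exact hmain.congr (fun ξ => (hrw ξ).symm)

/-- A traveling front of the competitive Lotka–Volterra system connecting `(0,0)` and
`(u*, v*)` with speed `c`. -/
def IsLVFront (k₁ k₂ r d c : ℝ) (φ ψ : ℝ → ℝ) : Prop :=
  ContDiff ℝ 2 φ ∧ ContDiff ℝ 2 ψ ∧
  (∀ ξ : ℝ, deriv (deriv φ) ξ - c * deriv φ ξ + (1 - φ ξ - k₁ * ψ ξ) * φ ξ = 0) ∧
  (∀ ξ : ℝ, d * deriv (deriv ψ) ξ - c * deriv ψ ξ + r * (1 - ψ ξ - k₂ * φ ξ) * ψ ξ = 0) ∧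
  Tendsto φ atBot (nhds 0) ∧ Tendsto ψ atBot (nhds 0) ∧
  Tendsto φ atTop (nhds ((1 - k₁) / (1 - k₁ * k₂))) ∧
  Tendsto ψ atTop (nhds ((1 - k₂) / (1 - k₁ * k₂))) ∧
  (∀ ξ : ℝ, 0 < φ ξ) ∧ (∀ ξ : ℝ, 0 < ψ ξ) ∧
  (∀ ξ : ℝ, 0 < deriv φ ξ) ∧ (∀ ξ : ℝ, 0 < deriv ψ ξ)

/-- `w(ξ) ~ A e^{aξ}` as `ξ → −∞`. -/
def ExpTail (w : ℝ → ℝ) (a A : ℝ) : Prop :=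
  Tendsto (fun ξ : ℝ => w ξ * Real.exp (-a * ξ)) atBot (nhds A)

/-- Formalization of the expansion `w(ξ) = A e^{aξ} + B e^{bξ} + h.o.t.` (with `a > b`)
as `ξ → −∞`. -/
def TwoExpTail (w : ℝ → ℝ) (a b A B : ℝ) : Prop :=
  (0 < B → ExpTail w b B) ∧ (B = 0 → ExpTail w a A)

/-- Formalization of the expansion `w(ξ) = A e^{aξ} − B ξ e^{aξ} + h.o.t.` as `ξ → −∞`. -/
def LinExpTail (w : ℝ → ℝ) (a A B : ℝ) : Prop :=
  (0 < B → Tendsto (fun ξ : ℝ => w ξ / (-ξ * Real.exp (a * ξ))) atBot (nhds B)) ∧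
  (B = 0 → ExpTail w a A)

/-- Lemma 2.7: asymptotic behavior of the traveling front as `ξ → −∞`
when `c = 2`, `d = r = 1`, so that `λ₃ = λ₄ = λ₅ = λ₆ = 1`. -/
theorem front_asymptotic_at_minus_infty_quadruple_root
    (k₁ k₂ : ℝ)
    (hk₁ : 0 < k₁) (hk₁' : k₁ < 1) (hk₂ : 0 < k₂) (hk₂' : k₂ < 1)
    (φ ψ : ℝ → ℝ) (hfront : IsLVFront k₁ k₂ 1 1 2 φ ψ) :
    ∃ α β γ σ : ℝ, 0 ≤ β ∧ 0 ≤ σ ∧ (β = 0 → 0 < α) ∧ (σ = 0 → 0 < γ) ∧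
      LinExpTail φ 1 α β ∧ LinExpTail ψ 1 γ σ := by
  obtain ⟨hφC, hψC, hEqφ0, hEqψ0, hφ0, hψ0, _, _, hφpos, hψpos, hφ'pos, hψ'pos⟩ := hfront
  -- convert the equations
  have hEqφ : ∀ ξ, deriv (deriv φ) ξ - 2 * deriv φ ξ +
      (1 - φ ξ - (fun ξ => k₁ * ψ ξ) ξ) * φ ξ = 0 := fun ξ => by
    have := hEqφ0 ξ; simpa using this
  have hEqψ : ∀ ξ, deriv (deriv ψ) ξ - 2 * deriv ψ ξ +
      (1 - ψ ξ - (fun ξ => k₂ * φ ξ) ξ) * ψ ξ = 0 := fun ξ => by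
    have := hEqψ0 ξ
    have h1 : deriv (deriv ψ) ξ - 2 * deriv ψ ξ + (1 - ψ ξ - k₂ * φ ξ) * ψ ξ = 0 := by
      linarith [this]
    simpa using h1
  have hpφ : ∀ ξ, 0 ≤ (fun ξ => k₁ * ψ ξ) ξ := fun ξ => le_of_lt (mul_pos hk₁ (hψpos ξ))
  have hpψ : ∀ ξ, 0 ≤ (fun ξ => k₂ * φ ξ) ξ := fun ξ => le_of_lt (mul_pos hk₂ (hφpos ξ))
  have hpφ0 : Tendsto (fun ξ => k₁ * ψ ξ) atBot (𝓝 0) := by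
    have := hψ0.const_mul k₁
    rwa [mul_zero] at this
  have hpψ0 : Tendsto (fun ξ => k₂ * φ ξ) atBot (𝓝 0) := by
    have := hφ0.const_mul k₂
    rwa [mul_zero] at this
  obtain ⟨C₁, M₁, hC₁, hd₁⟩ := decay_tail hφC hφpos hφ'pos hpφ hEqφ hφ0 hpφ0
  obtain ⟨C₂, M₂, hC₂, hd₂⟩ := decay_tail hψC hψpos hψ'pos hpψ hEqψ hψ0 hpψ0
  -- combined decay bounds
  have hqφ : ∀ ξ ≤ min M₁ M₂, φ ξ + (fun ξ => k₁ * ψ ξ) ξ ≤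
      (C₁ + k₁ * C₂) * Real.exp ((9/10) * ξ) := by
    intro ξ hξ
    have h1 := hd₁ ξ (le_trans hξ (min_le_left _ _))
    have h2 := hd₂ ξ (le_trans hξ (min_le_right _ _))
    have h3 : k₁ * ψ ξ ≤ k₁ * (C₂ * Real.exp ((9/10) * ξ)) :=
      mul_le_mul_of_nonneg_left h2 hk₁.le
    simp only
    nlinarith [Real.exp_pos ((9/10) * ξ)]
  have hqψ : ∀ ξ ≤ min M₁ M₂, ψ ξ + (fun ξ => k₂ * φ ξ) ξ ≤
      (C₂ + k₂ * C₁) * Real.exp ((9/10) * ξ) := by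
    intro ξ hξ
    have h1 := hd₁ ξ (le_trans hξ (min_le_left _ _))
    have h2 := hd₂ ξ (le_trans hξ (min_le_right _ _))
    have h3 : k₂ * φ ξ ≤ k₂ * (C₁ * Real.exp ((9/10) * ξ)) :=
      mul_le_mul_of_nonneg_left h1 hk₂.le
    simp only
    nlinarith [Real.exp_pos ((9/10) * ξ)]
  obtain ⟨α, β, hβ0, hβα, hβ1, hβ2⟩ :=
    tail_main (Mq := min M₁ M₂) hφC hφpos hpφ hEqφ
      (by positivity) hqφ
  obtain ⟨γ, σ, hσ0, hσγ, hσ1, hσ2⟩ :=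
    tail_main (Mq := min M₁ M₂) hψC hψpos hpψ hEqψ
      (by positivity) hqψ
  exact ⟨α, β, γ, σ, hβ0, hσ0, hβα, hσγ, ⟨hβ1, hβ2⟩, ⟨hσ1, hσ2⟩⟩
end
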